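/- arXiv:1905.02083 — 5 statements merged into one kernel-verified Lean document; each statement's English description precedes it below -/
import Mathlib

section
/- For every Cayley tree T of size n rooted at 1, the number of leading vertices of T equals n minus the number of improper edges of T: lead(T) = n − impe(T). -/
noncomputable section

open MvPolynomial Function

/-! ### The polynomial sequences -/

/-- The generalized Ramanujan polynomials `Q n`, in the variables
`x = X 0`, `y = X 1`, `z = X 2`, `t = X 3`:
`Q 1 = 1` and `Q (n+1) = (x + n z + n (y+t)) Q n + (y+t) y ∂_y (Q n)` for `n ≥ 1`. -/
def Qpoly : ℕ → MvPolynomial (Fin 4) ℚ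
  | 0 => 1
  | 1 => 1
  | n + 2 =>
      (X 0 + C ((n : ℚ) + 1) * X 2 + C ((n : ℚ) + 1) * (X 1 + X 3)) * Qpoly (n + 1)
        + (X 1 + X 3) * (X 1 * pderiv 1 (Qpoly (n + 1)))

/-- `R n (x,y,z,t) = Q n (x, y+1, z, t-1)`. -/
def Rpoly (n : ℕ) : MvPolynomial (Fin 4) ℚ :=
  bind₁ (fun i : Fin 4 => if i = 1 then X 1 + 1 else if i = 3 then X 3 - 1 else X i) (Qpoly n)

/-- `H 1 = 1` and `H (n+1) = (2n-1+(n+1)y) H n + (1+y)^2 H n'` for `n ≥ 1`. -/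
def Hpoly : ℕ → Polynomial ℚ
  | 0 => 1
  | 1 => 1
  | n + 2 =>
      (Polynomial.C (2 * (n : ℚ) + 1) + Polynomial.C ((n : ℚ) + 2) * Polynomial.X)
          * Hpoly (n + 1)
        + (1 + Polynomial.X) ^ 2 * Polynomial.derivative (Hpoly (n + 1))

/-- The Ramanujan polynomials, in the variables `x = X 0`, `y = X 1`:
`P 1 = 1` and `P (n+1) = (x + n + n y) P n + y^2 ∂_y (P n)` for `n ≥ 1`. -/
def Ppoly : ℕ → MvPolynomial (Fin 2) ℚ
  | 0 => 1
  | 1 => 1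
  | n + 2 =>
      (X 0 + C ((n : ℚ) + 1) * (1 + X 1)) * Ppoly (n + 1)
        + X 1 ^ 2 * pderiv 1 (Ppoly (n + 1))

/-- `C 1 = 1` and `C (n+1) = n (1+y) C n + y^2 C n'` for `n ≥ 1`. -/
def Cpoly : ℕ → Polynomial ℚ
  | 0 => 1
  | 1 => 1
  | n + 2 =>
      Polynomial.C ((n : ℚ) + 1) * (1 + Polynomial.X) * Cpoly (n + 1)
        + Polynomial.X ^ 2 * Polynomial.derivative (Cpoly (n + 1))

/-! ### Cayley trees

A Cayley tree of size `n`, rooted at the vertex with label `1`, is encoded by its parent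
function on `Fin n` (vertex `v` carries label `v+1`; the root is the vertex with value `0`).
The root is a fixed point and every vertex reaches the root by iterating the parent map. -/

def CayleyTree (n : ℕ) : Type :=
  {p : Fin n → Fin n //
    (∀ v, v.val = 0 → p v = v) ∧ ∀ v : Fin n, ∃ k, k < n ∧ (p^[k] v).val = 0}

noncomputable instance (n : ℕ) : Fintype (CayleyTree n) := by
  unfold CayleyTree; exact Fintype.ofFinite _

namespace CayleyTree

variable {n : ℕ} (T : CayleyTree n)

/-- `Desc T v a` : `v` is a descendant of `a` (including `a` itself). -/
def Desc (v a : Fin n) : Prop := ∃ k, T.1^[k] v = a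

/-- `β_T(a)` : the smallest label among the descendants of `a`, as a 0-based index. -/
def beta (a : Fin n) : ℕ := sInf {j : ℕ | ∃ v : Fin n, v.val = j ∧ T.Desc v a}

/-- The edge from `c` to its parent is improper: `λ(parent c) > β(c)`. -/
def ImproperEdge (c : Fin n) : Prop := c.val ≠ 0 ∧ T.beta c < (T.1 c).val

/-- The number of improper edges. -/
def impe : ℕ := {c : Fin n | T.ImproperEdge c}.ncard

/-- `a` is an improper parent, i.e. `β_T(a) ≠ λ_T(a)`. -/
def ImproperParent (a : Fin n) : Prop := T.beta a ≠ a.val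

/-- The number of improper parents. -/
def impp : ℕ := {a : Fin n | T.ImproperParent a}.ncard

/-- The degree of the root (= its number of children). -/
def degRoot : ℕ := {c : Fin n | c.val ≠ 0 ∧ (T.1 c).val = 0}.ncard

/-- The length of the greater ancestors path of `i` : the largest `k` such that all the
ancestors `p^[l] i`, `l ≤ k`, have a label `≥ λ(i)`. -/
def bapLen (i : Fin n) : ℕ := Nat.findGreatest (fun k => ∀ l ≤ k, i ≤ T.1^[l] i) n

/-- `i` is a leading vertex: `β_T(a_p) = λ_T(i)` where `a_p` is the top of the greater
ancestors path of `i`. -/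
def Leading (i : Fin n) : Prop := T.beta (T.1^[T.bapLen i] i) = i.val

/-- The number of leading vertices. -/
def lead : ℕ := {i : Fin n | T.Leading i}.ncard

end CayleyTree

/-! ### Greg trees

A Greg tree of size `n`, rooted at the vertex with label `1`, has labelled vertices `Fin n`
(vertex `Sum.inl v` carries label `v+1`) and unlabelled vertices `Fin m`, each of degree at
least `3`.  It is encoded by its parent function.  To make the encoding canonical, the
unlabelled vertices are required to be indexed in increasing order of the pair
`(β, depth)` (this pair is distinct for distinct unlabelled vertices, so every abstract Greg
tree admits exactly one such encoding). -/

/-- The root: the labelled vertex with label `1` (value `0`). -/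
def gregRoot {n m : ℕ} (v : Fin n ⊕ Fin m) : Prop := ∃ w : Fin n, w.val = 0 ∧ v = Sum.inl w

namespace GregRaw

variable {n m : ℕ} (p : Fin n ⊕ Fin m → Fin n ⊕ Fin m)

/-- `v` is a descendant of `a` (including `a` itself). -/
def Desc (v a : Fin n ⊕ Fin m) : Prop := ∃ k, p^[k] v = a

/-- `β(a)` : smallest label among the descendants of `a`, as a 0-based index. -/
def beta (a : Fin n ⊕ Fin m) : ℕ :=
  sInf {j : ℕ | ∃ w : Fin n, w.val = j ∧ Desc p (Sum.inl w) a}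

/-- Distance from `v` to the root. -/
def depth (v : Fin n ⊕ Fin m) : ℕ := sInf {k : ℕ | gregRoot (p^[k] v)}

/-- Sorting key for unlabelled vertices: the pair `(β, depth)` encoded as a number. -/
def key (u : Fin m) : ℕ := beta p (Sum.inr u) * (n + m + 1) + depth p (Sum.inr u)

/-- The set of children of a vertex. -/
def children (a : Fin n ⊕ Fin m) : Set (Fin n ⊕ Fin m) := {w | w ≠ a ∧ p w = a}

end GregRaw

/-- The conditions making a parent function on `Fin n ⊕ Fin m` a (canonically encoded)
Greg tree: the root is a fixed point, every vertex reaches the root, every unlabelled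
vertex has at least two children (hence, having also a parent, degree at least `3`),
and unlabelled vertices are indexed in increasing order of `(β, depth)`. -/
def GregCond (n m : ℕ) (p : Fin n ⊕ Fin m → Fin n ⊕ Fin m) : Prop :=
  (∀ v, gregRoot v → p v = v) ∧
  (∀ v, ∃ k, k < n + m ∧ gregRoot (p^[k] v)) ∧
  (∀ u : Fin m, 2 ≤ (GregRaw.children p (Sum.inr u)).ncard) ∧
  (∀ u w : Fin m, u < w ↔ GregRaw.key p u < GregRaw.key p w)

/-- Greg trees of size `n` rooted at `1`.  (The number of unlabelled vertices of a Greg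
tree with `n` labelled vertices is always at most `n`, so the bound `m ≤ n` does not
exclude any Greg tree.) -/
def GregTree (n : ℕ) : Type :=
  Σ m : Fin (n + 1), {p : Fin n ⊕ Fin m.val → Fin n ⊕ Fin m.val // GregCond n m.val p}

noncomputable instance (n : ℕ) : Fintype (GregTree n) := by
  unfold GregTree; exact Fintype.ofFinite _

namespace GregTree

variable {n : ℕ} (T : GregTree n)

/-- The number of unlabelled vertices. -/
def unl : ℕ := T.1.val

/-- `β_T`. -/
def beta (a : Fin n ⊕ Fin T.1.val) : ℕ := GregRaw.beta T.2.1 a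

/-- The labelled vertex `a` is an improper parent, i.e. `β_T(a) ≠ λ_T(a)`. -/
def ImproperParent (a : Fin n) : Prop := T.beta (Sum.inl a) ≠ a.val

/-- The number of improper parents. -/
def impp : ℕ := {a : Fin n | T.ImproperParent a}.ncard

/-- The degree of the root (= its number of children). -/
def degRoot : ℕ :=
  {w : Fin n ⊕ Fin T.1.val | ¬gregRoot w ∧ gregRoot (T.2.1 w)}.ncard

/-- The length of the greater ancestors path of the labelled vertex `i` : the largest `k`
such that all labelled vertices among the ancestors `p^[l] (inl i)`, `l ≤ k`, have a label
`≥ λ(i)`. -/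
def bapLen (i : Fin n) : ℕ :=
  Nat.findGreatest
    (fun k => ∀ l ≤ k, ∀ j : Fin n, T.2.1^[l] (Sum.inl i) = Sum.inl j → i ≤ j)
    (n + T.1.val)

/-- The labelled vertex `i` is a leading vertex. -/
def Leading (i : Fin n) : Prop := T.beta (T.2.1^[T.bapLen i] (Sum.inl i)) = i.val

/-- The number of leading vertices. -/
def lead : ℕ := {i : Fin n | T.Leading i}.ncard

end GregTree

/-! ### Planar trees

A planar tree of size `n` rooted at `1` is encoded by a parent function together with a
rank function giving each non-root vertex its position (from the left, starting at `0`)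
among the children of its parent; ranks of the children of a fixed vertex form an initial
segment of `ℕ`, so the encoding is canonical. -/

def PlanarTree (n : ℕ) : Type :=
  {pr : (Fin n → Fin n) × (Fin n → Fin n) //
    (∀ v, v.val = 0 → pr.1 v = v) ∧
    (∀ v : Fin n, ∃ k, k < n ∧ (pr.1^[k] v).val = 0) ∧
    (∀ v, v.val = 0 → (pr.2 v).val = 0) ∧
    (∀ c d, c.val ≠ 0 → d.val ≠ 0 → pr.1 c = pr.1 d → pr.2 c = pr.2 d → c = d) ∧
    (∀ c, c.val ≠ 0 → ∀ s : Fin n, s < pr.2 c →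
      ∃ d, d.val ≠ 0 ∧ pr.1 d = pr.1 c ∧ pr.2 d = s)}

noncomputable instance (n : ℕ) : Fintype (PlanarTree n) := by
  unfold PlanarTree; exact Fintype.ofFinite _

namespace PlanarTree

variable {n : ℕ} (T : PlanarTree n)

/-- `β_T(a)` : the smallest label among the descendants of `a`, as a 0-based index. -/
def beta (a : Fin n) : ℕ := sInf {j : ℕ | ∃ v : Fin n, v.val = j ∧ ∃ k, T.1.1^[k] v = a}

/-- `j` is elder: it has a brother to its right with a smaller `β`. -/
def Elder (j : Fin n) : Prop :=
  j.val ≠ 0 ∧ ∃ k : Fin n, k.val ≠ 0 ∧ T.1.1 k = T.1.1 j ∧ T.1.2 j < T.1.2 k ∧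
    T.beta k < T.beta j

/-- The number of elder vertices. -/
def eld : ℕ := {j : Fin n | T.Elder j}.ncard

/-- The edge from `c` to its parent is improper: `c` is a younger child and
`λ(parent c) > β(c)`. -/
def ImproperEdge (c : Fin n) : Prop := c.val ≠ 0 ∧ ¬T.Elder c ∧ T.beta c < (T.1.1 c).val

/-- The number of improper edges. -/
def impe : ℕ := {c : Fin n | T.ImproperEdge c}.ncard

/-- `young_T(i)` : the number of younger children of `i`. -/
def young (i : Fin n) : ℕ := {c : Fin n | c.val ≠ 0 ∧ T.1.1 c = i ∧ ¬T.Elder c}.ncard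

/-- `young_T(1)` : the number of younger children of the root. -/
def youngRoot : ℕ := {c : Fin n | c.val ≠ 0 ∧ (T.1.1 c).val = 0 ∧ ¬T.Elder c}.ncard

end PlanarTree


namespace CayleyTree

variable {n : ℕ} (T : CayleyTree n)

lemma fix_iter {v : Fin n} (hv : v.val = 0) (k : ℕ) : T.1^[k] v = v :=
  Function.iterate_fixed (T.2.1 v hv) k

lemma cycle_root {v : Fin n} {k : ℕ} (hk : 1 ≤ k) (h : T.1^[k] v = v) : v.val = 0 := by
  obtain ⟨j, -, hj⟩ := T.2.2 v
  have hkm : ∀ m, T.1^[k * m] v = v := by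
    intro m
    induction m with
    | zero => simp
    | succ m ih =>
      rw [Nat.mul_succ, Function.iterate_add_apply, h, ih]
  rcases Nat.eq_zero_or_pos j with hj0 | hj0
  · rw [hj0] at hj; simpa using hj
  · have h1 : T.1^[k * j] v = v := hkm j
    have hle : j ≤ k * j := Nat.le_mul_of_pos_left j hk
    have h2 : T.1^[k * j] v = T.1^[k * j - j] (T.1^[j] v) := by
      rw [← Function.iterate_add_apply]
      congr 1
      omega
    rw [h2, T.fix_iter hj (k * j - j)] at h1
    rw [← h1]; exact hj

lemma beta_le {v a : Fin n} (h : T.Desc v a) : T.beta a ≤ v.val :=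
  Nat.sInf_le ⟨v, rfl, h⟩

lemma beta_mem (a : Fin n) : ∃ v : Fin n, v.val = T.beta a ∧ T.Desc v a :=
  Nat.sInf_mem (s := {j : ℕ | ∃ v : Fin n, v.val = j ∧ T.Desc v a})
    ⟨a.val, a, rfl, ⟨0, rfl⟩⟩

lemma bapLen_ge (i : Fin n) : ∀ l ≤ T.bapLen i, i ≤ T.1^[l] i := by
  have h0 : (fun k => ∀ l ≤ k, i ≤ T.1^[l] i) 0 := by
    intro l hl
    rw [Nat.le_zero] at hl
    subst hl
    simp
  exact Nat.findGreatest_spec (P := fun k => ∀ l ≤ k, i ≤ T.1^[l] i) (Nat.zero_le n) h0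

lemma bapLen_lt (i : Fin n) (hi : i.val ≠ 0) : T.bapLen i < n := by
  obtain ⟨k, hkn, hk⟩ := T.2.2 i
  have hnotP : ¬ (i ≤ T.1^[k] i) := by
    rw [Fin.le_def, hk]
    omega
  by_contra h
  push_neg at h
  exact hnotP (T.bapLen_ge i k (by omega))

lemma parent_top_lt (i : Fin n) (hi : i.val ≠ 0) : T.1^[T.bapLen i + 1] i < i := by
  have hlt := T.bapLen_lt i hi
  have hng : ¬ (∀ l ≤ T.bapLen i + 1, i ≤ T.1^[l] i) := by
    have h := Nat.findGreatest_is_greatest (P := fun k => ∀ l ≤ k, i ≤ T.1^[l] i)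
      (n := n) (k := T.bapLen i + 1) (by unfold CayleyTree.bapLen; omega) (by omega)
    exact h
  push_neg at hng
  obtain ⟨l, hl, hgt⟩ := hng
  have hleq : l = T.bapLen i + 1 := by
    by_contra hne
    exact absurd (T.bapLen_ge i l (by omega)) (not_le.mpr hgt)
  rwa [hleq] at hgt

end CayleyTree

theorem lead_eq_card_sub_impe (n : ℕ) (T : CayleyTree n) :
    T.lead = n - T.impe := by
  rcases Nat.eq_zero_or_pos n with hn | hn
  · subst hn
    have h1 : {i : Fin 0 | T.Leading i} = ∅ := Set.eq_empty_of_isEmpty _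
    have h2 : {c : Fin 0 | T.ImproperEdge c} = ∅ := Set.eq_empty_of_isEmpty _
    unfold CayleyTree.lead CayleyTree.impe
    rw [h1, h2, Set.ncard_empty]
  · set f : Fin n → Fin n := fun i => T.1^[T.bapLen i] i with hf
    set Sl := {i : Fin n | T.Leading i ∧ i.val ≠ 0} with hSl
    set Sp := {c : Fin n | c.val ≠ 0 ∧ ¬ T.ImproperEdge c} with hSp
    -- the map f sends Sl into Sp, recording beta (f i) = i.val
    have hmaps : ∀ i ∈ Sl, f i ∈ Sp ∧ T.beta (f i) = i.val := by
      rintro i ⟨hlead, hi0⟩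
      have hbeta : T.beta (f i) = i.val := hlead
      have hii : i ≤ f i := T.bapLen_ge i _ le_rfl
      have hpa : T.1 (f i) < i := by
        have h := T.parent_top_lt i hi0
        rwa [Function.iterate_succ_apply'] at h
      have ha0 : (f i).val ≠ 0 := by
        intro h
        have hfix := T.2.1 (f i) h
        rw [hfix] at hpa
        exact absurd hii (not_le.mpr hpa)
      refine ⟨⟨ha0, ?_⟩, hbeta⟩
      intro himp
      obtain ⟨-, h2⟩ := himp
      rw [hbeta] at h2
      have h3 : (T.1 (f i)).val < i.val := hpa
      omega
    have hinj : Set.InjOn f Sl := by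
      intro i hi j hj hij
      have h1 := (hmaps i hi).2
      have h2 := (hmaps j hj).2
      rw [hij] at h1
      exact Fin.val_injective (h1.symm.trans h2)
    have himg : f '' Sl = Sp := by
      apply Set.Subset.antisymm
      · rintro - ⟨i, hi, rfl⟩
        exact (hmaps i hi).1
      · rintro c ⟨hc0, hcprop⟩
        have hle : (T.1 c).val ≤ T.beta c := by
          by_contra h
          exact hcprop ⟨hc0, by omega⟩
        obtain ⟨v, hv, k, hk⟩ := T.beta_mem c
        have hne : (T.1 c).val ≠ T.beta c := by
          intro heq
          have hvpc : v = T.1 c := Fin.val_injective (by omega)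
          have hcyc : T.1^[k + 1] c = c := by
            rw [Function.iterate_succ_apply, ← hvpc, hk]
          exact hc0 (T.cycle_root (Nat.le_add_left 1 k) hcyc)
        have hlt : (T.1 c).val < T.beta c := by omega
        have hv0 : v.val ≠ 0 := by omega
        have hPk : ∀ l ≤ k, v ≤ T.1^[l] v := by
          intro l hl
          have hdesc : T.Desc (T.1^[l] v) c := by
            refine ⟨k - l, ?_⟩
            rw [← Function.iterate_add_apply, show k - l + l = k by omega]
            exact hk
          have hb := T.beta_le hdesc
          rw [Fin.le_def]
          omega
        have hnP : ¬ v ≤ T.1^[k + 1] v := by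
          rw [Function.iterate_succ_apply', hk, Fin.le_def]
          omega
        obtain ⟨j, hjn, hj⟩ := T.2.2 v
        have hkj : k < j := by
          by_contra h
          push_neg at h
          have heq : T.1^[k] v = T.1^[j] v := by
            rw [show k = (k - j) + j by omega, Function.iterate_add_apply,
              T.fix_iter hj (k - j)]
          rw [hk] at heq
          rw [← heq] at hj
          exact hc0 hj
        have hkn : k < n := lt_trans hkj hjn
        have hbl : T.bapLen v = k := by
          have hle1 : k ≤ T.bapLen v := Nat.le_findGreatest (le_of_lt hkn) hPk
          have hle2 : T.bapLen v ≤ k := by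
            by_contra h
            push_neg at h
            exact hnP (T.bapLen_ge v (k + 1) h)
          omega
        refine ⟨v, ⟨?_, hv0⟩, ?_⟩
        · show T.beta (T.1^[T.bapLen v] v) = v.val
          rw [hbl, hk, hv]
        · show T.1^[T.bapLen v] v = c
          rw [hbl, hk]
    have hcard1 : Sl.ncard = Sp.ncard := by
      rw [← himg, Set.ncard_image_of_injOn hinj]
    have hroot : T.Leading ⟨0, hn⟩ := by
      show T.beta (T.1^[T.bapLen ⟨0, hn⟩] ⟨0, hn⟩) = (⟨0, hn⟩ : Fin n).val
      rw [T.fix_iter rfl]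
      exact Nat.sInf_eq_zero.mpr (Or.inl ⟨⟨0, hn⟩, rfl, 0, rfl⟩)
    have hS1 : {i : Fin n | T.Leading i} = insert ⟨0, hn⟩ Sl := by
      ext i
      simp only [Set.mem_setOf_eq, Set.mem_insert_iff, hSl]
      constructor
      · intro h
        by_cases h0 : i.val = 0
        · left; exact Fin.ext h0
        · right; exact ⟨h, h0⟩
      · rintro (rfl | ⟨h, -⟩)
        · exact hroot
        · exact h
    have hnotmem : (⟨0, hn⟩ : Fin n) ∉ Sl := fun h => h.2 rfl
    have hleadcard : T.lead = Sl.ncard + 1 := by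
      unfold CayleyTree.lead
      rw [hS1, Set.ncard_insert_of_notMem hnotmem (Set.toFinite _)]
    have hsplit : {c : Fin n | T.ImproperEdge c} ∪ Sp = {c : Fin n | c.val ≠ 0} := by
      ext c
      simp only [Set.mem_union, Set.mem_setOf_eq, hSp]
      constructor
      · rintro (h | h)
        · exact h.1
        · exact h.1
      · intro h
        by_cases hh : T.ImproperEdge c
        · exact Or.inl hh
        · exact Or.inr ⟨h, hh⟩
    have hdisj : Disjoint {c : Fin n | T.ImproperEdge c} Sp := by
      rw [Set.disjoint_left]
      intro c hc hc'
      exact hc'.2 hc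
    have hcompl : {c : Fin n | c.val ≠ 0}.ncard = n - 1 := by
      have h1 : {c : Fin n | c.val ≠ 0} = ({⟨0, hn⟩} : Set (Fin n))ᶜ := by
        ext c
        simp [Fin.ext_iff]
      rw [h1]
      have h2 := Set.ncard_add_ncard_compl ({⟨0, hn⟩} : Set (Fin n))
      rw [Set.ncard_singleton] at h2
      have h3 : Nat.card (Fin n) = n := by simp
      omega
    have hunion := Set.ncard_union_eq hdisj (Set.toFinite _) (Set.toFinite _)
    rw [hsplit, hcompl] at hunion
    have himpe : T.impe = {c : Fin n | T.ImproperEdge c}.ncard := rfl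
    omega


end
end

section
/- For every n ≥ 0, R_{n+1}(0, y, 0, 1) = (2n−1)!! · (y+1)^n, where (2n−1)!! = 1·3·5···(2n−1) is the double factorial (with (−1)!! = 1). -/
noncomputable section

open MvPolynomial Function

private def wval : Fin 4 → Polynomial ℚ := ![0, Polynomial.X + 1, 0, 0]

private lemma aeval_pderiv_comm (f : MvPolynomial (Fin 4) ℚ) :
    MvPolynomial.aeval wval (pderiv 1 f)
      = Polynomial.derivative (MvPolynomial.aeval wval f) := by
  induction f using MvPolynomial.induction_on with
  | C a => simp
  | add p q hp hq => simp [hp, hq]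
  | mul_X p i hp =>
      rw [pderiv_mul, map_add, map_mul, map_mul, map_mul, hp,
        Polynomial.derivative_mul]
      congr 1
      fin_cases i <;> simp [wval]

private lemma aeval_Qpoly (n : ℕ) :
    MvPolynomial.aeval wval (Qpoly (n + 1))
      = Polynomial.C (Nat.doubleFactorial (2 * n - 1) : ℚ)
          * (Polynomial.X + 1) ^ n := by
  induction n with
  | zero => simp [Qpoly]
  | succ n ih =>
      set c : ℚ := (Nat.doubleFactorial (2 * n - 1) : ℚ) with hc
      have hdf : (Nat.doubleFactorial (2 * (n + 1) - 1) : ℚ)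
          = (2 * (n : ℚ) + 1) * c := by
        rcases (by omega : (2 * (n + 1) - 1) = (2 * n - 1) + 2 ∨ n = 0) with h | h
        · rw [h, Nat.doubleFactorial, hc]
          have hn : 1 ≤ 2 * n := by omega
          push_cast [Nat.cast_sub hn]
          ring
        · subst h; norm_num [hc, Nat.doubleFactorial]
      show MvPolynomial.aeval wval (Qpoly (n + 2)) = _
      rw [Qpoly, map_add, map_mul, map_mul, map_mul, aeval_pderiv_comm, ih]
      have hw1 : MvPolynomial.aeval wval (X 1 : MvPolynomial (Fin 4) ℚ)
          = Polynomial.X + 1 := by simp [wval]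
      have hw : MvPolynomial.aeval wval
          ((X 0 : MvPolynomial (Fin 4) ℚ) + C ((n : ℚ) + 1) * X 2
            + C ((n : ℚ) + 1) * (X 1 + X 3))
          = Polynomial.C ((n : ℚ) + 1) * (Polynomial.X + 1) := by
        simp [wval]
      have hyt : MvPolynomial.aeval wval ((X 1 : MvPolynomial (Fin 4) ℚ) + X 3)
          = Polynomial.X + 1 := by simp [wval]
      rw [hw, hw1, hyt, hdf]
      have hder : (Polynomial.X + 1) * ((Polynomial.X + 1)
            * Polynomial.derivative (Polynomial.C c * (Polynomial.X + 1) ^ n))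
          = Polynomial.C ((n : ℚ) * c) * (Polynomial.X + 1) ^ (n + 1) := by
        rw [Polynomial.derivative_mul, Polynomial.derivative_C,
          Polynomial.derivative_pow]
        simp only [Polynomial.derivative_add, Polynomial.derivative_X,
          Polynomial.derivative_one, add_zero, zero_mul, zero_add, mul_one]
        rcases Nat.eq_zero_or_pos n with hn | hn
        · subst hn; simp
        · rw [show n + 1 = 2 + (n - 1) by omega, pow_add, map_mul]
          push_cast
          ring
      rw [hder, map_mul, map_add]
      simp only [map_add, map_mul, map_one, map_ofNat]
      ring

/-- For every `n ≥ 0`,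
`R_{n+1}(0, y, 0, 1) = (2n-1)!! (y+1)^n`, where `(2n-1)!!` is the double factorial
(with the convention `(-1)!! = 1`, which is what `Nat.doubleFactorial (2*n-1)` gives
thanks to truncated subtraction). -/
theorem Rpoly_eval_eq_doubleFactorial (n : ℕ) :
    MvPolynomial.aeval ![0, Polynomial.X, 0, 1] (Rpoly (n + 1))
      = Polynomial.C (Nat.doubleFactorial (2 * n - 1) : ℚ)
          * (Polynomial.X + 1) ^ n := by
  rw [Rpoly, MvPolynomial.aeval_bind₁]
  have hfun : (fun i : Fin 4 => MvPolynomial.aeval ![0, Polynomial.X, 0, 1]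
      ((if i = 1 then X 1 + 1 else if i = 3 then X 3 - 1 else X i :
        MvPolynomial (Fin 4) ℚ))) = wval := by
    funext i; fin_cases i <;> simp [wval]
  rw [hfun]
  exact aeval_Qpoly n

end
end

section
/- For every n ≥ 1, all coefficients of the polynomial Q_n(0, y+1, 0, −1) (equivalently, of R_n(0, y, 0, 0)) are nonnegative integers. -/
noncomputable section

open MvPolynomial Function

/-! ### Auxiliary material for Statement 14 -/

namespace Stmt14

noncomputable def vsub : Fin 4 → Polynomial ℚ := ![0, Polynomial.X + 1, 0, -1]

noncomputable def Npoly : ℕ → Polynomial ℕ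
  | 0 => 1
  | 1 => 1
  | n + 2 =>
      Polynomial.C (n + 1) * Polynomial.X * Npoly (n + 1)
        + Polynomial.X * (Polynomial.X + 1) * Polynomial.derivative (Npoly (n + 1))

lemma deriv_aeval (Q : MvPolynomial (Fin 4) ℚ) :
    Polynomial.derivative (aeval vsub Q) = aeval vsub (pderiv 1 Q) := by
  induction Q using MvPolynomial.induction_on with
  | C a => simp
  | add p q hp hq => simp [hp, hq]
  | mul_X p i hp =>
      rw [map_mul, Polynomial.derivative_mul, hp, pderiv_mul, map_add, map_mul, map_mul]
      fin_cases i <;>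
        simp [vsub, pderiv_X, Pi.single_apply] <;> ring

lemma aeval_Qpoly (n : ℕ) :
    aeval vsub (Qpoly n) = Polynomial.map (Nat.castRingHom ℚ) (Npoly n) := by
  induction n with
  | zero => simp [Qpoly, Npoly]
  | succ n ih =>
    match n, ih with
    | 0, _ => simp [Qpoly, Npoly]
    | n + 1, ih =>
      rw [Qpoly, Npoly]
      rw [map_add, map_mul, map_mul, map_mul, ← deriv_aeval]
      have h0 : aeval vsub (X 0 : MvPolynomial (Fin 4) ℚ) = 0 := by simp [vsub]
      have h2 : aeval vsub (X 2 : MvPolynomial (Fin 4) ℚ) = 0 := by simp [vsub]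
      have h13 : aeval vsub ((X 1 + X 3 : MvPolynomial (Fin 4) ℚ)) = Polynomial.X := by
        simp [vsub]
      have h1 : aeval vsub (X 1 : MvPolynomial (Fin 4) ℚ) = Polynomial.X + 1 := by
        simp [vsub]
      rw [map_add, map_add, map_mul, map_mul, h0, h2, h13, h1, ih]
      rw [Polynomial.map_add, Polynomial.map_mul, Polynomial.map_mul,
        Polynomial.map_mul, ← Polynomial.derivative_map]
      simp only [Polynomial.map_add, Polynomial.map_mul, Polynomial.map_one,
        Polynomial.map_X, Polynomial.map_natCast, Polynomial.map_C,
        MvPolynomial.aeval_C, Polynomial.derivative_map, map_add, map_one, map_natCast]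
      have hC : (Polynomial.C ((Nat.castRingHom ℚ) n) : Polynomial ℚ)
          = (n : Polynomial ℚ) := by simp
      rw [hC]
      push_cast
      ring

lemma aeval_R (Q : MvPolynomial (Fin 4) ℚ) :
    (MvPolynomial.aeval ![0, Polynomial.X, 0, 0]
      (bind₁ (fun i : Fin 4 => if i = 1 then X 1 + 1 else if i = 3 then X 3 - 1 else X i) Q))
      = MvPolynomial.aeval ![(0:Polynomial ℚ), Polynomial.X + 1, 0, -1] Q := by
  rw [aeval_bind₁]
  have hfun : (fun i : Fin 4 => (aeval ![(0:Polynomial ℚ), Polynomial.X, 0, 0])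
      ((if i = 1 then X 1 + 1 else if i = 3 then X 3 - 1 else X i : MvPolynomial (Fin 4) ℚ)))
      = ![(0:Polynomial ℚ), Polynomial.X + 1, 0, -1] := by
    funext i
    fin_cases i <;> simp
  rw [hfun]

end Stmt14

/-- For every `n ≥ 1`, all coefficients of `Q_n(0, y+1, 0, -1)`
(equivalently, of `R_n(0, y, 0, 0)`) are nonnegative integers. -/
theorem Qpoly_eval_coeff_nonneg_int (n : ℕ) (hn : 1 ≤ n) :
    (∀ k : ℕ, ∃ m : ℕ,
      (MvPolynomial.aeval ![0, Polynomial.X + 1, 0, -1] (Qpoly n)).coeff k = (m : ℚ)) ∧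
    (∀ k : ℕ, ∃ m : ℕ,
      (MvPolynomial.aeval ![0, Polynomial.X, 0, 0] (Rpoly n)).coeff k = (m : ℚ)) := by
  have key : (MvPolynomial.aeval ![0, Polynomial.X + 1, 0, -1] (Qpoly n))
      = Polynomial.map (Nat.castRingHom ℚ) (Stmt14.Npoly n) := by
    have := Stmt14.aeval_Qpoly n
    rw [← this]; rfl
  have keyR : (MvPolynomial.aeval ![0, (Polynomial.X : Polynomial ℚ), 0, 0] (Rpoly n))
      = (MvPolynomial.aeval ![0, Polynomial.X + 1, 0, -1] (Qpoly n)) := by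
    exact Stmt14.aeval_R (Qpoly n)
  constructor
  · intro k
    refine ⟨(Stmt14.Npoly n).coeff k, ?_⟩
    rw [key, Polynomial.coeff_map]
    rfl
  · intro k
    refine ⟨(Stmt14.Npoly n).coeff k, ?_⟩
    rw [keyR, key, Polynomial.coeff_map]
    rfl

end
end

section
/- Let T be a Greg tree of size n ≥ 2 rooted at 1 such that the root 1 has degree 1, T has no improper parent (impp(T) = 0), and T has exactly two leading vertices (lead(T) = 2). Then every labelled vertex of T other than 1 is a leaf; that is, all internal vertices of T apart from the root are unlabelled. -/
noncomputable section

open MvPolynomial Function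

/-! ### Auxiliary lemmas for Statement 15 -/

namespace Statement15

variable {n m : ℕ} {p : Fin n ⊕ Fin m → Fin n ⊕ Fin m}

lemma desc_trans {x y z : Fin n ⊕ Fin m} (h1 : GregRaw.Desc p x y)
    (h2 : GregRaw.Desc p y z) : GregRaw.Desc p x z := by
  obtain ⟨k, hk⟩ := h1; obtain ⟨l, hl⟩ := h2
  exact ⟨l + k, by rw [Function.iterate_add_apply, hk, hl]⟩

/-- If a vertex is on a nontrivial cycle and reaches the fixed point `r`, it is `r`. -/
lemma eq_root_of_cycle {r v : Fin n ⊕ Fin m} (hr : p r = r)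
    (c : ℕ) (hc1 : 1 ≤ c) (hcv : p^[c] v = v) (hk : ∃ k, p^[k] v = r) : v = r := by
  obtain ⟨k, hkv⟩ := hk
  have h1 : p^[c * k] v = v := by
    rw [Function.iterate_mul]; exact Function.iterate_fixed hcv k
  have h2 : p^[c * k] v = r := by
    have hle : k ≤ c * k := Nat.le_mul_of_pos_left k (by omega)
    have heq : c * k = (c * k - k) + k := by omega
    rw [heq, Function.iterate_add_apply, hkv]
    exact Function.iterate_fixed hr _
  rw [← h1, h2]

lemma beta_le {w : Fin n} {v : Fin n ⊕ Fin m} (h : GregRaw.Desc p (Sum.inl w) v) :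
    GregRaw.beta p v ≤ w.val := by
  unfold GregRaw.beta
  exact Nat.sInf_le ⟨w, rfl, h⟩

lemma beta_mem (hld : ∀ v, ∃ a : Fin n, GregRaw.Desc p (Sum.inl a) v)
    (v : Fin n ⊕ Fin m) :
    ∃ w : Fin n, w.val = GregRaw.beta p v ∧ GregRaw.Desc p (Sum.inl w) v := by
  have hne : {j : ℕ | ∃ w : Fin n, w.val = j ∧ GregRaw.Desc p (Sum.inl w) v}.Nonempty := by
    obtain ⟨a, ha⟩ := hld v; exact ⟨a.val, a, rfl, ha⟩
  have h := Nat.sInf_mem hne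
  obtain ⟨w, hw1, hw2⟩ := h
  exact ⟨w, hw1, hw2⟩

/-- Every vertex of a Greg tree has a labelled descendant. -/
lemma exists_labelled_desc {r : Fin n ⊕ Fin m} (hr : p r = r)
    (hreach : ∀ v, ∃ k, k < n + m ∧ p^[k] v = r)
    (hch : ∀ u : Fin m, 2 ≤ (GregRaw.children p (Sum.inr u)).ncard) :
    ∀ v, ∃ a : Fin n, GregRaw.Desc p (Sum.inl a) v := by
  have hex : ∀ v : Fin n ⊕ Fin m, ∃ k, p^[k] v = r := fun v => (hreach v).imp fun k h => h.2
  have hdlt : ∀ v, Nat.find (hex v) < n + m := by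
    intro v; obtain ⟨k, hk, hk2⟩ := hreach v
    exact lt_of_le_of_lt (Nat.find_min' _ hk2) hk
  have key : ∀ N : ℕ, ∀ v, n + m - Nat.find (hex v) ≤ N →
      ∃ a : Fin n, GregRaw.Desc p (Sum.inl a) v := by
    intro N
    induction N with
    | zero => intro v hv; have := hdlt v; omega
    | succ N ih =>
      intro v hv
      rcases hv2 : v with a | u
      · exact ⟨a, 0, rfl⟩
      · have h2 := hch u
        have hne : (GregRaw.children p (Sum.inr u)).Nonempty := by
          apply Set.nonempty_of_ncard_ne_zero; omega
        obtain ⟨c, hc1, hc2⟩ := hne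
        have hc0 : Nat.find (hex c) ≠ 0 := by
          intro h0
          have hcr : c = r := by
            have := Nat.find_spec (hex c); rw [h0] at this; simpa using this
          apply hc1
          rw [hcr, ← hr, ← hcr]; exact hc2
        have hstep : Nat.find (hex (Sum.inr u)) ≤ Nat.find (hex c) - 1 := by
          apply Nat.find_min'
          have h3 : p^[(Nat.find (hex c) - 1) + 1] c = r := by
            rw [Nat.sub_add_cancel (by omega)]; exact Nat.find_spec (hex c)
          rw [Function.iterate_succ_apply, hc2] at h3
          exact h3
        obtain ⟨a, k, hk⟩ := ih c (by have := hdlt c; rw [hv2] at hv; omega)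
        refine ⟨a, k + 1, ?_⟩
        rw [Function.iterate_succ_apply', hk, hc2]
  intro v
  exact key (n + m) v (by omega)

end Statement15

open Statement15 in
/-- Core lemma: a labelled vertex `i` whose "top" `p^[s] (inl i)` has a labelled parent
of smaller label, whose path to the top passes through no other labelled vertex, and
such that every labelled descendant of the top has label `≥ i`, is a leading vertex. -/
lemma statement15_leading_of {n : ℕ} (T : GregTree n) (i : Fin n) (s : ℕ)
    (hs : s ≤ n + T.1.val)
    (hpath : ∀ l ≤ s, ∀ b : Fin n, T.2.1^[l] (Sum.inl i) = Sum.inl b → b = i)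
    (ha : ∃ a : Fin n, a.val < i.val ∧ T.2.1^[s + 1] (Sum.inl i) = Sum.inl a)
    (hbv : ∀ w : Fin n,
      GregRaw.Desc T.2.1 (Sum.inl w) (T.2.1^[s] (Sum.inl i)) → i.val ≤ w.val)
    (hld : ∀ v, ∃ a : Fin n, GregRaw.Desc T.2.1 (Sum.inl a) v) :
    T.Leading i := by
  have hbap : T.bapLen i = s := by
    unfold GregTree.bapLen
    rw [Nat.findGreatest_eq_iff]
    refine ⟨hs, fun _ => ?_, fun k hk1 hk2 hP => ?_⟩
    · intro l hl j hj
      rw [hpath l hl j hj]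
    · obtain ⟨a, ha1, ha2⟩ := ha
      have h := hP (s + 1) (by omega) a ha2
      rw [Fin.le_def] at h
      omega
  unfold GregTree.Leading GregTree.beta
  rw [hbap]
  apply le_antisymm
  · exact beta_le ⟨s, rfl⟩
  · obtain ⟨w, hw1, hw2⟩ := beta_mem hld (T.2.1^[s] (Sum.inl i))
    rw [← hw1]
    exact hbv w hw2

/-- If a Greg tree `T` of size `n ≥ 2` rooted at `1` has root of
degree `1`, no improper parent, and exactly two leading vertices, then every labelled
vertex other than the root is a leaf. -/
theorem gregTree_labelled_vertices_are_leaves (n : ℕ) (hn : 2 ≤ n) (T : GregTree n)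
    (hdeg : T.degRoot = 1) (himpp : T.impp = 0) (hlead : T.lead = 2) :
    ∀ i : Fin n, i.val ≠ 0 → GregRaw.children T.2.1 (Sum.inl i) = ∅ := by
  classical
  intro i hi
  by_contra hne
  obtain ⟨w, hw_ne, hw_p⟩ := Set.nonempty_iff_ne_empty.mpr hne
  obtain ⟨hfix, hreach0, hch, -⟩ := T.2.2
  have hn0 : 0 < n := by omega
  set r : Fin n ⊕ Fin T.1.val := Sum.inl ⟨0, hn0⟩ with hrdef
  have hr : T.2.1 r = r := hfix r ⟨⟨0, hn0⟩, rfl, rfl⟩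
  have hreach : ∀ v, ∃ k, k < n + T.1.val ∧ T.2.1^[k] v = r := by
    intro v
    obtain ⟨k, hk, b, hb1, hb2⟩ := hreach0 v
    exact ⟨k, hk, by rw [hb2, hrdef]; exact congrArg Sum.inl (Fin.ext hb1)⟩
  have hld := Statement15.exists_labelled_desc hr hreach hch
  have himpp' : ∀ a : Fin n, GregRaw.beta T.2.1 (Sum.inl a) = a.val := by
    intro a
    by_contra h
    have hmem : a ∈ {a : Fin n | T.ImproperParent a} := h
    have h2 : {a : Fin n | T.ImproperParent a} = ∅ :=
      (Set.ncard_eq_zero (Set.toFinite _)).mp himpp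
    rw [h2] at hmem
    exact hmem
  -- the "first labelled strict ancestor" data for a non-root labelled vertex
  have main : ∀ x : Fin n, (Sum.inl x : Fin n ⊕ Fin T.1.val) ≠ r →
      ∃ s, s ≤ n + T.1.val ∧
        (∀ l ≤ s, ∀ b : Fin n, T.2.1^[l] (Sum.inl x) = Sum.inl b → b = x) ∧
        (∃ a : Fin n, a ≠ x ∧ T.2.1^[s + 1] (Sum.inl x) = Sum.inl a) ∧
        (∀ l, 1 ≤ l → (∃ b : Fin n, T.2.1^[l] (Sum.inl x) = Sum.inl b) → s + 1 ≤ l) := by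
    intro x hx
    obtain ⟨kr, hkr, hkr2⟩ := hreach (Sum.inl x)
    have hkr1 : 1 ≤ kr := by
      rcases Nat.eq_zero_or_pos kr with h0 | h1
      · rw [h0, Function.iterate_zero_apply] at hkr2; exact absurd hkr2 hx
      · exact h1
    have hwit : 1 ≤ kr ∧ ∃ b : Fin n, T.2.1^[kr] (Sum.inl x) = Sum.inl b :=
      ⟨hkr1, ⟨0, hn0⟩, by rw [hkr2, hrdef]⟩
    have hfind : ∃ k, 1 ≤ k ∧ ∃ b : Fin n, T.2.1^[k] (Sum.inl x) = Sum.inl b := ⟨kr, hwit⟩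
    obtain ⟨hk₀1, a, ha⟩ := Nat.find_spec hfind
    have hk₀le : Nat.find hfind ≤ kr := Nat.find_min' hfind hwit
    refine ⟨Nat.find hfind - 1, by omega, ?_, ?_, ?_⟩
    · intro l hl b hb
      rcases Nat.eq_zero_or_pos l with h0 | h1
      · rw [h0, Function.iterate_zero_apply] at hb
        exact (Sum.inl.inj hb).symm
      · exact absurd ⟨h1, b, hb⟩ (Nat.find_min hfind (by omega : l < Nat.find hfind))
    · have hss : Nat.find hfind - 1 + 1 = Nat.find hfind := by omega
      refine ⟨a, ?_, by rw [hss]; exact ha⟩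
      intro hax
      rw [hax] at ha
      exact hx (Statement15.eq_root_of_cycle hr (Nat.find hfind) hk₀1 ha ⟨kr, hkr2⟩)
    · intro l hl1 hl2
      have := Nat.find_min' hfind ⟨hl1, hl2⟩
      omega
  -- the root is leading
  have hlead_r : T.Leading ⟨0, hn0⟩ := by
    unfold GregTree.Leading GregTree.beta
    have hfix0 : T.2.1^[T.bapLen ⟨0, hn0⟩] (Sum.inl (⟨0, hn0⟩ : Fin n)) = r := by
      rw [hrdef]
      exact Function.iterate_fixed (by rw [← hrdef]; exact hr) _
    rw [hfix0]
    have h0 : GregRaw.beta T.2.1 r ≤ 0 := by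
      rw [hrdef]; exact Statement15.beta_le ⟨0, rfl⟩
    exact Nat.le_antisymm h0 (Nat.zero_le _)
  -- the vertex with label 2 (value 1) is leading
  have hlead_i1 : T.Leading ⟨1, by omega⟩ := by
    have hx : (Sum.inl (⟨1, by omega⟩ : Fin n) : Fin n ⊕ Fin T.1.val) ≠ r := by
      rw [hrdef]
      intro h
      have h' := Sum.inl.inj h
      exact absurd (congrArg Fin.val h') (by norm_num)
    obtain ⟨s, hs, hpath, ⟨a, hax, ha⟩, hmin⟩ := main _ hx
    apply statement15_leading_of T _ s hs hpath ?_ ?_ hld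
    · refine ⟨a, ?_, ha⟩
      have h1 : GregRaw.beta T.2.1 (Sum.inl a) ≤ (⟨1, by omega⟩ : Fin n).val :=
        Statement15.beta_le ⟨s + 1, ha⟩
      rw [himpp' a] at h1
      have h1' : a.val ≤ 1 := h1
      have h2 : a.val ≠ 1 := fun h => hax (Fin.ext h)
      show a.val < 1
      omega
    · intro w' hw'
      show 1 ≤ w'.val
      by_contra hlt
      have hw0 : w'.val = 0 := by omega
      have hwr' : (Sum.inl w' : Fin n ⊕ Fin T.1.val) = r := by
        rw [hrdef]; exact congrArg Sum.inl (Fin.ext hw0)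
      obtain ⟨t, ht⟩ := hw'
      rw [hwr'] at ht
      have hvr : T.2.1^[s] (Sum.inl (⟨1, by omega⟩ : Fin n)) = r := by
        rw [← ht]; exact Function.iterate_fixed hr t
      have hcontra := hpath s le_rfl ⟨0, hn0⟩ (by rw [hvr, hrdef])
      exact absurd (congrArg Fin.val hcontra) (by norm_num)
  -- the smallest labelled descendant of w is leading
  have hwr : w ≠ r := by
    intro h
    rw [h, hr, hrdef] at hw_p
    exact hi (congrArg Fin.val (Sum.inl.inj hw_p)).symm
  obtain ⟨j, hj1, s₁, hs₁⟩ := Statement15.beta_mem hld w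
  have hjr : (Sum.inl j : Fin n ⊕ Fin T.1.val) ≠ r := by
    intro h
    rw [h] at hs₁
    rw [Function.iterate_fixed hr s₁] at hs₁
    exact hwr hs₁.symm
  have hjd_i : GregRaw.Desc T.2.1 (Sum.inl j) (Sum.inl i) :=
    ⟨s₁ + 1, by rw [Function.iterate_succ_apply', hs₁, hw_p]⟩
  have hival : i.val ≤ j.val := by
    have h := Statement15.beta_le hjd_i
    rw [himpp' i] at h
    exact h
  have hj0 : j.val ≠ 0 := by
    intro h0
    exact hjr (by rw [hrdef]; exact congrArg Sum.inl (Fin.ext h0))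
  have hj2 : 2 ≤ j.val := by
    by_contra h
    have hjval : j.val = 1 := by omega
    have hieq : i = j := Fin.ext (by omega)
    have hcyc : T.2.1^[s₁ + 1] (Sum.inl j) = Sum.inl j := by
      rw [Function.iterate_succ_apply', hs₁, hw_p, hieq]
    exact hjr (Statement15.eq_root_of_cycle hr (s₁ + 1) (by omega) hcyc
      ((hreach (Sum.inl j)).imp fun k hk => hk.2))
  have hlead_j : T.Leading j := by
    obtain ⟨s, hs, hpath, ⟨a, hax, ha⟩, hmin⟩ := main j hjr
    apply statement15_leading_of T _ s hs hpath ?_ ?_ hld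
    · refine ⟨a, ?_, ha⟩
      have h1 : GregRaw.beta T.2.1 (Sum.inl a) ≤ j.val := Statement15.beta_le ⟨s + 1, ha⟩
      rw [himpp' a] at h1
      have h2 : a.val ≠ j.val := fun h => hax (Fin.ext h)
      omega
    · intro w' hw'
      have hk₀s : s + 1 ≤ s₁ + 1 := hmin (s₁ + 1) (by omega)
        ⟨i, by rw [Function.iterate_succ_apply', hs₁, hw_p]⟩
      have hvw : GregRaw.Desc T.2.1 (T.2.1^[s] (Sum.inl j)) w := by
        refine ⟨s₁ - s, ?_⟩
        rw [← Function.iterate_add_apply, show s₁ - s + s = s₁ by omega]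
        exact hs₁
      have h := Statement15.beta_le (Statement15.desc_trans hw' hvw)
      rw [hj1]
      exact h
  -- three distinct leading vertices, contradiction with lead = 2
  have h01 : (⟨0, hn0⟩ : Fin n) ≠ ⟨1, by omega⟩ := fun h =>
    absurd (congrArg Fin.val h) (by norm_num)
  have h0j : (⟨0, hn0⟩ : Fin n) ≠ j := fun h =>
    hj0 (by rw [← h])
  have h1j : (⟨1, by omega⟩ : Fin n) ≠ j := fun h => by
    have h' : (1 : ℕ) = j.val := congrArg Fin.val h
    omega
  have hsub : ({⟨0, hn0⟩, ⟨1, by omega⟩, j} : Set (Fin n)) ⊆ {i : Fin n | T.Leading i} := by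
    rintro x (rfl | rfl | rfl)
    · exact hlead_r
    · exact hlead_i1
    · exact hlead_j
  have hcard : ({⟨0, hn0⟩, ⟨1, by omega⟩, j} : Set (Fin n)).ncard = 3 := by
    rw [Set.ncard_insert_of_notMem (by simp [h01, h0j]),
      Set.ncard_insert_of_notMem (by simp [h1j]), Set.ncard_singleton]
  have hle := Set.ncard_le_ncard hsub (Set.toFinite _)
  rw [hcard] at hle
  have hlead2 : {i : Fin n | T.Leading i}.ncard = 2 := hlead
  omega

end
end

section
/- For every n ≥ 1, C_n(1) = n^{n-1}; equivalently, the polynomials C_n evaluated at y = 1 count the rooted labelled trees on n vertices. -/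
noncomputable section

open MvPolynomial Function

namespace ShorAux
open Finset

def c : ℕ → ℕ → ℚ
  | 0, _ => 0
  | 1, 0 => 1
  | 1, _ + 1 => 0
  | m + 2, 0 => ((m : ℚ) + 1) * c (m + 1) 0
  | m + 2, k + 1 => ((m : ℚ) + 1) * c (m + 1) (k + 1) + ((m : ℚ) + 1 + k) * c (m + 1) k

def phi (n d e : ℕ) : ℚ :=
  ∑ a ∈ range (d + 1),
    (d.descFactorial a : ℚ) * ((e + a - 1).choose a : ℚ) * (n : ℚ) ^ (d - a)

lemma phi_d_zero (n e : ℕ) : phi n 0 e = 1 := by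
  simp [phi]

lemma phi_e_zero (n d : ℕ) : phi n d 0 = (n : ℚ) ^ d := by
  rw [phi, Finset.sum_range_succ']
  have h1 : ∀ a ∈ range d,
      ((d.descFactorial (a+1) : ℚ)) * (((0 + (a+1) - 1).choose (a+1) : ℚ)) * (n:ℚ) ^ (d - (a+1)) = 0 := by
    intro a _
    have : (0 + (a + 1) - 1).choose (a + 1) = 0 := by
      apply Nat.choose_eq_zero_of_lt; omega
    simp [this]
  rw [Finset.sum_congr rfl h1]
  simp

/-- The key recurrence for `phi`. -/
lemma phi_rec (n d e : ℕ) :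
    phi n (d + 1) e
      = ((n : ℚ) - (d + 1)) * phi n d (e + 1) + ((e : ℚ) + 1) * phi n d (e + 2) := by
  have key : ∀ a ∈ range (d + 1),
      ((n : ℚ) - (d + 1)) * ((d.descFactorial a : ℚ) * ((e + 1 + a - 1).choose a : ℚ) * (n : ℚ) ^ (d - a))
        + ((e : ℚ) + 1) * ((d.descFactorial a : ℚ) * ((e + 2 + a - 1).choose a : ℚ) * (n : ℚ) ^ (d - a))
      = (((d+1).descFactorial (a+1) : ℚ) * ((e + (a+1) - 1).choose (a+1) : ℚ) * (n : ℚ) ^ (d + 1 - (a+1)))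
        + ((n : ℚ) * ((d.descFactorial a : ℚ) * ((e + 1 + a - 1).choose a : ℚ) * (n : ℚ) ^ (d - a))
        - (n : ℚ) * ((d.descFactorial (a+1) : ℚ) * ((e + 1 + (a+1) - 1).choose (a+1) : ℚ) * (n : ℚ) ^ (d - (a+1)))) := by
    intro a ha
    have ha' : a ≤ d := by simpa [Nat.lt_succ_iff] using ha
    have f3 : e + (a+1) - 1 = e + a := by omega
    have f4 : e + 1 + a - 1 = e + a := by omega
    have f4' : e + 1 + (a+1) - 1 = e + a + 1 := by omega
    have f5 : e + 2 + a - 1 = e + a + 1 := by omega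
    have f8 : d + 1 - (a+1) = d - a := by omega
    have hF1 : (((d+1).descFactorial (a+1) : ℕ) : ℚ) = ((d:ℚ)+1) * (d.descFactorial a : ℚ) := by
      rw [Nat.succ_descFactorial_succ, Nat.cast_mul]; push_cast; ring
    have c6 : (((e + a + 1).choose (a+1) : ℕ) : ℚ)
        = ((e + a).choose a : ℚ) + ((e + a).choose (a+1) : ℚ) := by
      exact_mod_cast congrArg (Nat.cast (R := ℚ)) (Nat.choose_succ_succ (e + a) a)
    have c7 : (((e + a + 1).choose (a+1) : ℕ) : ℚ) * ((a : ℚ) + 1)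
        = ((e : ℚ) + 1) * ((e + a + 1).choose a : ℚ) := by
      have h := Nat.choose_succ_right_eq (e + a + 1) a
      have h2 : e + a + 1 - a = e + 1 := by omega
      rw [h2] at h
      have h3 : (((e + a + 1).choose (a+1) * (a+1) : ℕ) : ℚ)
          = (((e + a + 1).choose a * (e+1) : ℕ) : ℚ) := by rw [h]
      push_cast at h3
      linear_combination h3
    rw [f3, f4, f4', f5, f8, hF1]
    rcases Nat.lt_or_ge a d with hlt | hge
    · have hc : ((d - a : ℕ) : ℚ) = (d : ℚ) - a := Nat.cast_sub ha'
      have hB : ((d.descFactorial (a+1) : ℕ) : ℚ)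
          = ((d:ℚ) - a) * (d.descFactorial a : ℚ) := by
        rw [Nat.descFactorial_succ, Nat.cast_mul, hc]
      have hQ : (n:ℚ) ^ (d - a) = (n:ℚ) ^ (d - (a+1)) * n := by
        rw [← pow_succ]; congr 1; omega
      rw [hB, hQ]
      linear_combination ((n:ℚ) * (d.descFactorial a : ℚ) * (n:ℚ)^(d-(a+1)) * ((d:ℚ)+1)) * c6
        - ((n:ℚ) * (d.descFactorial a : ℚ) * (n:ℚ)^(d-(a+1))) * c7
    · have hae : a = d := by omega
      subst hae
      have hz : ((a.descFactorial (a+1) : ℕ) : ℚ) = 0 := by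
        norm_cast
        rw [Nat.descFactorial_eq_zero_iff_lt]; omega
      rw [hz]
      have hz0 : a - a = 0 := by omega
      rw [hz0]
      linear_combination ((a.descFactorial a : ℚ) * ((a:ℚ)+1)) * c6
        - (a.descFactorial a : ℚ) * c7
  unfold phi
  rw [Finset.mul_sum, Finset.mul_sum, ← Finset.sum_add_distrib]
  rw [Finset.sum_congr rfl key]
  rw [Finset.sum_range_succ'
    (fun a => ((d+1).descFactorial a : ℚ) * ((e + a - 1).choose a : ℚ) * (n : ℚ) ^ (d + 1 - a)) (d+1)]
  rw [Finset.sum_add_distrib]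
  have tele : ∑ a ∈ range (d+1),
      ((n : ℚ) * ((d.descFactorial a : ℚ) * ((e + 1 + a - 1).choose a : ℚ) * (n : ℚ) ^ (d - a))
        - (n : ℚ) * ((d.descFactorial (a+1) : ℚ) * ((e + 1 + (a+1) - 1).choose (a+1) : ℚ) * (n : ℚ) ^ (d - (a+1))))
      = (n : ℚ) * ((d.descFactorial 0 : ℚ) * ((e + 1 + 0 - 1).choose 0 : ℚ) * (n : ℚ) ^ (d - 0))
        - (n : ℚ) * ((d.descFactorial (d+1) : ℚ) * ((e + 1 + (d+1) - 1).choose (d+1) : ℚ) * (n : ℚ) ^ (d - (d+1))) :=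
    Finset.sum_range_sub'
      (fun a => (n : ℚ) * ((d.descFactorial a : ℚ) * ((e + 1 + a - 1).choose a : ℚ) * (n : ℚ) ^ (d - a))) (d+1)
  rw [tele]
  have hUtop : ((d.descFactorial (d+1) : ℕ) : ℚ) = 0 := by
    norm_cast; rw [Nat.descFactorial_eq_zero_iff_lt]; omega
  rw [hUtop]
  simp
  ring


lemma c_eq_zero : ∀ m k, m + 1 ≤ k → c (m + 1) k = 0 := by
  intro m
  induction m with
  | zero =>
      intro k hk
      obtain ⟨k', rfl⟩ : ∃ k', k = k' + 1 := ⟨k - 1, by omega⟩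
      rfl
  | succ m ih =>
      intro k hk
      obtain ⟨k', rfl⟩ : ∃ k', k = k' + 1 := ⟨k - 1, by omega⟩
      show ((m : ℚ) + 1) * c (m + 1) (k' + 1) + ((m : ℚ) + 1 + k') * c (m + 1) k' = 0
      rw [ih (k' + 1) (by omega), ih k' (by omega)]
      ring

def S (n m : ℕ) : ℚ := ∑ k ∈ range n, c (m + 1) k * phi n (n - m - 1) (k + m)

lemma S_step (n m : ℕ) (h : m + 2 ≤ n) : S n (m + 1) = S n m := by
  obtain ⟨d, rfl⟩ : ∃ d, n = m + d + 2 := ⟨n - m - 2, by omega⟩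
  set n := m + d + 2 with hn
  have e1 : n - m - 1 = d + 1 := by omega
  have e2 : n - (m + 1) - 1 = d := by omega
  rw [S, S, e1, e2]
  set N := m + d + 1 with hN
  have hnN : n = N + 1 := by omega
  -- abbreviations
  set p : ℕ → ℚ := fun j => phi n d j with hp
  -- RHS transform via phi_rec
  have hrec : ∀ k, c (m + 1) k * phi n (d + 1) (k + m)
      = ((m : ℚ) + 1) * c (m + 1) k * p (k + m + 1)
        + (((m : ℚ) + 1 + k) * c (m + 1) k * p (k + m + 2)) := by
    intro k
    rw [phi_rec n d (k + m)]
    have hcast : ((n : ℕ) : ℚ) - ((d : ℚ) + 1) = (m : ℚ) + 1 := by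
      rw [hn]; push_cast; ring
    rw [hcast]
    have : ((k + m : ℕ) : ℚ) + 1 = (m : ℚ) + 1 + k := by push_cast; ring
    rw [this]
    show c (m+1) k * (((m:ℚ)+1) * p (k+m+1) + ((m:ℚ)+1+k) * p (k+m+2)) = _
    ring
  rw [Finset.sum_congr rfl (fun k _ => hrec k)]
  rw [Finset.sum_add_distrib]
  -- LHS transform
  have hLsplit : ∑ k ∈ range n, c (m + 2) k * p (k + (m + 1))
      = (∑ k ∈ range n, ((m : ℚ) + 1) * c (m + 1) k * p (k + m + 1))
        + ∑ k ∈ range N, ((m : ℚ) + 1 + k) * c (m + 1) k * p (k + m + 2) := by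
    rw [hnN]
    rw [Finset.sum_range_succ' (fun k => c (m + 2) k * p (k + (m + 1))) N]
    rw [Finset.sum_range_succ' (fun k => ((m : ℚ) + 1) * c (m + 1) k * p (k + m + 1)) N]
    have hterm : ∀ k, c (m + 2) (k + 1) * p ((k + 1) + (m + 1))
        = ((m : ℚ) + 1) * c (m + 1) (k + 1) * p ((k + 1) + m + 1)
          + ((m : ℚ) + 1 + k) * c (m + 1) k * p (k + m + 2) := by
      intro k
      have hi : (k + 1) + (m + 1) = k + m + 2 := by omega
      have hi2 : (k + 1) + m + 1 = k + m + 2 := by omega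
      rw [hi, hi2]
      show (((m : ℚ) + 1) * c (m + 1) (k + 1) + ((m : ℚ) + 1 + k) * c (m + 1) k) * p (k + m + 2) = _
      ring
    rw [Finset.sum_congr rfl (fun k _ => hterm k), Finset.sum_add_distrib]
    have h0 : c (m + 2) 0 * p (0 + (m + 1)) = ((m : ℚ) + 1) * c (m + 1) 0 * p (0 + m + 1) := by
      have : (0:ℕ) + (m + 1) = 0 + m + 1 := by omega
      rw [this]
      show (((m : ℚ) + 1) * c (m + 1) 0) * p (0 + m + 1) = _
      ring
    rw [h0]
    ring
  rw [hLsplit]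
  -- match the second sums: range N vs range n with last term zero
  have hlast : ∑ k ∈ range n, ((m : ℚ) + 1 + k) * c (m + 1) k * p (k + m + 2)
      = ∑ k ∈ range N, ((m : ℚ) + 1 + k) * c (m + 1) k * p (k + m + 2) := by
    rw [hnN, Finset.sum_range_succ]
    rw [c_eq_zero m N (by omega)]
    ring
  rw [hlast]

lemma S_const (n : ℕ) : ∀ j, j + 1 ≤ n → S n j = S n 0 := by
  intro j
  induction j with
  | zero => intro _; rfl
  | succ j ih =>
      intro hj
      rw [S_step n j (by omega), ih (by omega)]

lemma S_last (n : ℕ) (hn : 1 ≤ n) : S n (n - 1) = ∑ k ∈ range n, c n k := by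
  obtain ⟨N, rfl⟩ : ∃ N, n = N + 1 := ⟨n - 1, by omega⟩
  have e0 : N + 1 - 1 = N := by omega
  rw [S, e0]
  have e1 : N + 1 - N - 1 = 0 := by omega
  rw [e1]
  apply Finset.sum_congr rfl
  intro k _
  rw [phi_d_zero]
  ring

lemma S_zero (n : ℕ) (hn : 1 ≤ n) : S n 0 = (n : ℚ) ^ (n - 1) := by
  obtain ⟨N, rfl⟩ : ∃ N, n = N + 1 := ⟨n - 1, by omega⟩
  have e1 : N + 1 - 0 - 1 = N := by omega
  rw [S, e1]
  rw [Finset.sum_range_succ' (fun k => c 1 k * phi (N + 1) N (k + 0)) N]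
  have hz : ∀ k ∈ range N, c 1 (k + 1) * phi (N + 1) N ((k + 1) + 0) = 0 := by
    intro k _
    rw [c_eq_zero 0 (k + 1) (by omega)]
    ring
  rw [Finset.sum_congr rfl hz]
  simp only [Finset.sum_const_zero, zero_add]
  show c 1 0 * phi (N + 1) N 0 = _
  rw [phi_e_zero]
  have : c 1 0 = 1 := rfl
  rw [this]
  simp

lemma coeff_Cpoly : ∀ m k, (Cpoly (m + 1)).coeff k = c (m + 1) k := by
  intro m
  induction m with
  | zero =>
      intro k
      show (1 : Polynomial ℚ).coeff k = c 1 k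
      cases k with
      | zero => simp [Polynomial.coeff_one]; rfl
      | succ k =>
          rw [Polynomial.coeff_one]
          simp only [Nat.succ_ne_zero, if_false]
          exact (c_eq_zero 0 (k + 1) (by omega)).symm
  | succ m ih =>
      intro k
      show (Polynomial.C ((m : ℚ) + 1) * (1 + Polynomial.X) * Cpoly (m + 1)
        + Polynomial.X ^ 2 * Polynomial.derivative (Cpoly (m + 1))).coeff k = c (m + 2) k
      rw [Polynomial.coeff_add]
      rw [mul_assoc, Polynomial.coeff_C_mul]
      have hexp : (1 + Polynomial.X) * Cpoly (m + 1)
          = Cpoly (m + 1) + Polynomial.X * Cpoly (m + 1) := by ring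
      rw [hexp, Polynomial.coeff_add]
      rw [mul_comm (Polynomial.X ^ 2), Polynomial.coeff_mul_X_pow']
      cases k with
      | zero =>
          rw [if_neg (by omega : ¬ 2 ≤ 0)]
          have hx : (Polynomial.X * Cpoly (m + 1)).coeff 0 = 0 := by
            rw [Polynomial.mul_coeff_zero, Polynomial.coeff_X_zero, zero_mul]
          rw [hx, ih 0]
          simp only [c]
          ring
      | succ k =>
          rw [Polynomial.coeff_X_mul]
          cases k with
          | zero =>
              rw [if_neg (by omega : ¬ 2 ≤ 1)]
              rw [ih 1, ih 0]
              simp only [c]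
              push_cast
              ring
          | succ k =>
              rw [if_pos (by omega : 2 ≤ k + 1 + 1)]
              have hk : k + 1 + 1 - 2 = k := by omega
              rw [hk, Polynomial.coeff_derivative, ih (k + 2), ih (k + 1)]
              simp only [c]
              push_cast
              ring

lemma natDegree_Cpoly : ∀ m, (Cpoly (m + 1)).natDegree ≤ m := by
  intro m
  induction m with
  | zero => show (1 : Polynomial ℚ).natDegree ≤ 0; simp
  | succ m ih =>
      show (Polynomial.C ((m : ℚ) + 1) * (1 + Polynomial.X) * Cpoly (m + 1)
        + Polynomial.X ^ 2 * Polynomial.derivative (Cpoly (m + 1))).natDegree ≤ m + 1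
      have h1X : (1 + Polynomial.X : Polynomial ℚ).natDegree ≤ 1 := by
        refine le_trans (Polynomial.natDegree_add_le _ _) ?_
        simp [Polynomial.natDegree_one, Polynomial.natDegree_X]
      have hC : (Polynomial.C ((m : ℚ) + 1)).natDegree = 0 := Polynomial.natDegree_C _
      have h1 : (Polynomial.C ((m : ℚ) + 1) * (1 + Polynomial.X)).natDegree ≤ 1 := by
        refine le_trans Polynomial.natDegree_mul_le ?_
        omega
      have hA : (Polynomial.C ((m : ℚ) + 1) * (1 + Polynomial.X) * Cpoly (m + 1)).natDegree
          ≤ m + 1 := by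
        refine le_trans Polynomial.natDegree_mul_le ?_
        omega
      have hXp : (Polynomial.X ^ 2 : Polynomial ℚ).natDegree = 2 := by
        simp [Polynomial.natDegree_X_pow]
      have hB : (Polynomial.X ^ 2 * Polynomial.derivative (Cpoly (m + 1))).natDegree
          ≤ m + 1 := by
        cases m with
        | zero =>
            have hz : Polynomial.derivative (Cpoly 1) = 0 := by
              show Polynomial.derivative (1 : Polynomial ℚ) = 0
              simp
            rw [hz, mul_zero]
            simp
        | succ m' =>
            have hD : (Polynomial.derivative (Cpoly (m' + 1 + 1))).natDegree ≤ m' := by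
              refine le_trans (Polynomial.natDegree_derivative_le _) ?_
              omega
            refine le_trans Polynomial.natDegree_mul_le ?_
            omega
      exact le_trans (Polynomial.natDegree_add_le _ _) (max_le hA hB)

end ShorAux

/-- **Statement 19.** For every `n ≥ 1`, `C_n(1) = n^(n-1)`. -/
theorem Cpoly_eval_one (n : ℕ) (hn : 1 ≤ n) :
    (Cpoly n).eval 1 = (n : ℚ) ^ (n - 1) := by
  obtain ⟨N, rfl⟩ : ∃ N, n = N + 1 := ⟨n - 1, by omega⟩
  have hdeg : (Cpoly (N + 1)).natDegree < N + 1 :=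
    Nat.lt_succ_of_le (ShorAux.natDegree_Cpoly N)
  rw [Polynomial.eval_eq_sum_range' hdeg]
  simp only [one_pow, mul_one]
  rw [Finset.sum_congr rfl (fun k _ => ShorAux.coeff_Cpoly N k)]
  rw [← ShorAux.S_last (N + 1) (by omega)]
  rw [ShorAux.S_const (N + 1) (N + 1 - 1) (by omega)]
  exact ShorAux.S_zero (N + 1) (by omega)

end
end
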